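/- Let d ∈ ℕ and let P ∈ ℂ[x] be a polynomial with deg P ≤ d such that |P(x)| ≤ 1 for every x ∈ ℂ with |x| = 1. Then there exist θ, φ ∈ ℝ^{d+1} and λ ∈ ℝ such that for every N ≥ 1 and every N×N unitary matrix U, the top-left N×N block of (∏_{j=1}^{d} R(θ_j, φ_j, 0)·A) · R(θ_0, φ_0, λ) equals P(U), where A = |0⟩⟨0| ⊗ U + |1⟩⟨1| ⊗ I_N. -/

import Mathlib

/-!
On the unit circle `1 - |P|²` is a nonnegative trigonometric polynomial of degree `d`, so by the
Fejér–Riesz theorem it equals `|Q|²` for a polynomial `Q` of degree at most `d`. Fejér–Riesz is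
proved by peeling off roots: if `z⁻ⁿ F(z) ≥ 0` on the circle then `F` is self-inversive, so its
nonzero roots come in pairs `r, 1/r̄`, and a root on the circle is a minimum of `z⁻ⁿ F(z)`, hence
a double root.

The circuit is the block evaluation at `U` of a product of `2×2` polynomial matrices, one layer
`R(θ, φ, 0) · diag(X, 1)` per factor, so it suffices that every pair `(p, q)` of degree at most
`d` with `|p|² + |q|² = 1` on the circle is the first column of such a product. The top
coefficient of `p p* + q q* = Xᵈ`, where `p*(z) = zᵈ conj (p (1/z̄))`, shows that the leading and
constant coefficient vectors of `(p, q)` are orthogonal; this lets one choose a layer whose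
inverse sends `(p, q)` to `(X p', q')` with `p', q'` of degree at most `d - 1`.
-/

open Matrix Kronecker

/-- The single-qubit rotation `R(θ,φ,λ)` tensored with the `N×N` identity:
`R(θ,φ,λ) = [[e^{i(λ+φ)}cos θ, e^{iφ} sin θ], [e^{iλ} sin θ, -cos θ]] ⊗ I_N`. -/
noncomputable def gqspR (N : ℕ) (θ φ lam : ℝ) : Matrix (Fin 2 × Fin N) (Fin 2 × Fin N) ℂ :=
  (!![Complex.exp (Complex.I * ((lam : ℂ) + (φ : ℂ))) * (Real.cos θ : ℂ),
      Complex.exp (Complex.I * (φ : ℂ)) * (Real.sin θ : ℂ);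
      Complex.exp (Complex.I * (lam : ℂ)) * (Real.sin θ : ℂ),
      -(Real.cos θ : ℂ)] : Matrix (Fin 2) (Fin 2) ℂ) ⊗ₖ (1 : Matrix (Fin N) (Fin N) ℂ)

/-- The anti-controlled evolution operator `A = |0⟩⟨0| ⊗ U + |1⟩⟨1| ⊗ I_N`. -/
noncomputable def gqspA (N : ℕ) (U : Matrix (Fin N) (Fin N) ℂ) :
    Matrix (Fin 2 × Fin N) (Fin 2 × Fin N) ℂ :=
  (!![1, 0; 0, 0] : Matrix (Fin 2) (Fin 2) ℂ) ⊗ₖ U +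
    (!![0, 0; 0, 1] : Matrix (Fin 2) (Fin 2) ℂ) ⊗ₖ (1 : Matrix (Fin N) (Fin N) ℂ)

/-- The interleaved GQSP circuit `(∏_{j=1}^d R(θ_j,φ_j,0) A) R(θ_0,φ_0,λ)`
(the factor with the largest index `j = d` acting first on the right of the
`j = 1, …, d` factors, and `R(θ_0,φ_0,λ)` acting first of all). -/
noncomputable def gqspCircuit (N d : ℕ) (U : Matrix (Fin N) (Fin N) ℂ)
    (θ φ : Fin (d + 1) → ℝ) (lam : ℝ) : Matrix (Fin 2 × Fin N) (Fin 2 × Fin N) ℂ :=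
  (List.ofFn fun j : Fin d => gqspR N (θ j.succ) (φ j.succ) 0 * gqspA N U).prod *
    gqspR N (θ 0) (φ 0) lam

/-- The top-left `N×N` block of a `2N×2N` block matrix. -/
def block00 (N : ℕ) (W : Matrix (Fin 2 × Fin N) (Fin 2 × Fin N) ℂ) :
    Matrix (Fin N) (Fin N) ℂ :=
  Matrix.of fun i j => W (0, i) (0, j)

/-- The bottom-left `N×N` block of a `2N×2N` block matrix. -/
def block10 (N : ℕ) (W : Matrix (Fin 2 × Fin N) (Fin 2 × Fin N) ℂ) :
    Matrix (Fin N) (Fin N) ℂ :=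
  Matrix.of fun i j => W (1, i) (0, j)

open Polynomial ComplexConjugate Filter Topology
open scoped ComplexOrder

theorem setOf_norm_eq_one_infinite : {z : ℂ | ‖z‖ = 1}.Infinite := by
  have hsphere : {z : ℂ | ‖z‖ = 1} = Metric.sphere 0 1 := by ext; simp
  rw [hsphere]
  refine (isPreconnected_sphere (by simp [Complex.rank_real_complex]) 0 1).infinite_of_nontrivial
    ⟨1, by simp, -1, by simp, by norm_num⟩

theorem Polynomial.eq_of_eval_eq_on_unitCircle {p q : ℂ[X]}
    (h : ∀ z : ℂ, ‖z‖ = 1 → p.eval z = q.eval z) : p = q :=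
  eq_of_infinite_eval_eq p q (setOf_norm_eq_one_infinite.mono fun z hz => h z hz)

theorem Complex.conj_mul_self_of_norm_eq_one {z : ℂ} (hz : ‖z‖ = 1) : conj z * z = 1 := by
  rw [mul_comm, Complex.mul_conj', hz]; norm_num

theorem Complex.inv_conj_of_norm_eq_one {z : ℂ} (hz : ‖z‖ = 1) : (conj z)⁻¹ = z := by
  rw [← map_inv₀, Complex.inv_eq_conj hz, Complex.conj_conj]

theorem Complex.norm_eq_one_of_inv_conj_eq {r : ℂ} (hr : r ≠ 0) (h : (conj r)⁻¹ = r) :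
    ‖r‖ = 1 := by
  have hnorm := congrArg norm h
  rw [norm_inv, Complex.norm_conj, inv_eq_iff_eq_inv] at hnorm
  have hpos := norm_pos_iff.mpr hr
  field_simp at hnorm
  nlinarith

theorem Complex.norm_sq_mul_sub_mul_sub_conj_inv {z r : ℂ} (hz : ‖z‖ = 1) (hr : r ≠ 0) :
    (‖r‖ ^ 2 : ℂ) * ((z - r) * (z - (conj r)⁻¹)) = ‖z - r‖ ^ 2 * (z * -r) := by
  have hzz := Complex.conj_mul_self_of_norm_eq_one hz
  have hr' : conj r ≠ 0 := by simpa using hr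
  rw [← Complex.mul_conj', ← Complex.mul_conj', map_sub]
  field_simp
  linear_combination (z - r) * hzz

theorem hasDerivAt_mul_exp_mul_I (r : ℂ) :
    HasDerivAt (fun t : ℝ => r * Complex.exp (t * Complex.I)) (r * Complex.I) 0 := by
  have h := ((hasDerivAt_id (0 : ℂ)).mul_const Complex.I).cexp.const_mul r
  simpa using h.comp_ofReal

theorem norm_mul_exp_mul_I {r : ℂ} (hr : ‖r‖ = 1) (t : ℝ) :
    ‖r * Complex.exp (t * Complex.I)‖ = 1 := by
  rw [norm_mul, hr, Complex.norm_exp_ofReal_mul_I, one_mul]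

theorem Complex.eq_zero_of_hasDerivAt_of_nonneg {g : ℝ → ℂ} {D : ℂ} {t : ℝ}
    (hD : HasDerivAt g D t) (hg : ∀ s, 0 ≤ g s) (ht : g t = 0) : D = 0 := by
  have hre : HasDerivAt (fun s => (g s).re) D.re t :=
    Complex.reCLM.hasFDerivAt.comp_hasDerivAt t hD
  have him : HasDerivAt (fun s => (g s).im) D.im t :=
    Complex.imCLM.hasFDerivAt.comp_hasDerivAt t hD
  have him_zero : (fun s => (g s).im) = fun _ => 0 :=
    funext fun s => ((Complex.nonneg_iff.mp (hg s)).2).symm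
  refine Complex.ext ?_ ?_
  · refine IsLocalMin.hasDerivAt_eq_zero (Eventually.of_forall fun s => ?_) hre
    simpa [ht] using (Complex.nonneg_iff.mp (hg s)).1
  · rw [him_zero] at him
    exact him.unique (hasDerivAt_const t 0)

noncomputable def conjReflect (n : ℕ) (p : ℂ[X]) : ℂ[X] :=
  reflect n (p.map (starRingEnd ℂ))

theorem natDegree_conjReflect_le {n : ℕ} {p : ℂ[X]} (hp : p.natDegree ≤ n) :
    (conjReflect n p).natDegree ≤ n :=
  natDegree_reflect_le.trans (max_le le_rfl (natDegree_map_le.trans hp))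

theorem coeff_conjReflect {n i : ℕ} (p : ℂ[X]) (hi : i ≤ n) :
    (conjReflect n p).coeff i = conj (p.coeff (n - i)) := by
  rw [conjReflect, coeff_reflect, revAt_le hi, coeff_map]

theorem eval_conjReflect {n : ℕ} {p : ℂ[X]} (hp : p.natDegree ≤ n) {w : ℂ} (hw : w ≠ 0) :
    (conjReflect n p).eval w = w ^ n * conj (p.eval (conj w)⁻¹) := by
  let _ := invertibleOfNonzero (inv_ne_zero hw)
  have h := eval₂_reflect_mul_pow (RingHom.id ℂ) w⁻¹ n (p.map (starRingEnd ℂ))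
    (natDegree_map_le.trans hp)
  have hconj : eval w⁻¹ (p.map (starRingEnd ℂ)) = conj (p.eval (conj w)⁻¹) := by
    rw [← map_inv₀, ← eval_map_apply, Complex.conj_conj]
  rw [invOf_eq_inv, inv_inv, ← eval, ← eval, hconj] at h
  rw [conjReflect, ← h, inv_pow, mul_comm, inv_mul_cancel_right₀ (pow_ne_zero n hw)]

theorem eval_conjReflect_of_norm_eq_one {n : ℕ} {p : ℂ[X]} (hp : p.natDegree ≤ n) {z : ℂ}
    (hz : ‖z‖ = 1) : (conjReflect n p).eval z = z ^ n * conj (p.eval z) := by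
  rw [eval_conjReflect hp (by rintro rfl; simp at hz), Complex.inv_conj_of_norm_eq_one hz]

/-- `z⁻ⁿ F(z)` is a nonnegative real on the unit circle (`≤` on `ℂ` is the `ComplexOrder`). -/
def NonnegOnCircle (n : ℕ) (F : ℂ[X]) : Prop :=
  ∀ z : ℂ, ‖z‖ = 1 → 0 ≤ conj z ^ n * F.eval z

theorem eval_X_sub_C_mul_X_sub_C_conj_inv_mul {n : ℕ} {z r : ℂ} {G Q : ℂ[X]} (hz : ‖z‖ = 1)
    (hr : r ≠ 0) (hG : (C (-r) * G).eval z = z ^ n * (‖Q.eval z‖ ^ 2 : ℝ)) :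
    ((X - C r) * (X - C (conj r)⁻¹) * G).eval z
      = z ^ (n + 1) * (‖(C (‖r‖⁻¹ : ℂ) * ((X - C r) * Q)).eval z‖ ^ 2 : ℝ) := by
  have hkey := Complex.norm_sq_mul_sub_mul_sub_conj_inv hz hr
  have hr' : (‖r‖ : ℂ) ≠ 0 := by exact_mod_cast norm_ne_zero_iff.mpr hr
  simp only [eval_mul, eval_C, eval_sub, eval_X, norm_mul, Complex.norm_real, norm_inv,
    norm_norm] at hG ⊢
  push_cast at hG ⊢
  field_simp
  linear_combination G.eval z * hkey + (z * ‖z - r‖ ^ 2) * hG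

namespace NonnegOnCircle

variable {n : ℕ} {F : ℂ[X]}

theorem of_forall_ne {r : ℂ} (h : ∀ z : ℂ, ‖z‖ = 1 → z ≠ r → 0 ≤ conj z ^ n * F.eval z) :
    NonnegOnCircle n F := by
  intro z hz
  rcases ne_or_eq z r with hzr | rfl
  · exact h z hz hzr
  let γ : ℝ → ℂ := fun t => z * Complex.exp (t * Complex.I)
  have hlim : Tendsto (fun t => conj (γ t) ^ n * F.eval (γ t)) (𝓝[≠] 0)
      (𝓝 (conj z ^ n * F.eval z)) := by
    have hcont : Continuous fun t => conj (γ t) ^ n * F.eval (γ t) := by fun_prop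
    simpa [γ] using (hcont.tendsto 0).mono_left nhdsWithin_le_nhds
  have hz0 : z * Complex.I ≠ 0 := mul_ne_zero (by rintro rfl; simp at hz) Complex.I_ne_zero
  refine ge_of_tendsto hlim ?_
  filter_upwards [(hasDerivAt_mul_exp_mul_I z).eventually_ne hz0] with t ht
  exact h _ (norm_mul_exp_mul_I hz t) ht

theorem derivative_eval_eq_zero (hF : NonnegOnCircle n F) {r : ℂ} (hr : ‖r‖ = 1)
    (hroot : F.eval r = 0) : F.derivative.eval r = 0 := by
  have hr0 : r ≠ 0 := by rintro rfl; simp at hr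
  have hdiv : HasDerivAt (fun w => (w⁻¹) ^ n * F.eval w) ((r⁻¹) ^ n * F.derivative.eval r) r := by
    refine (((hasDerivAt_inv hr0).fun_pow n).mul (F.hasDerivAt r)).congr_deriv ?_
    rw [hroot, mul_zero, zero_add]
  have hcomp := hdiv.comp_of_eq (0 : ℝ) (hasDerivAt_mul_exp_mul_I r) (by simp)
  have hzero := Complex.eq_zero_of_hasDerivAt_of_nonneg hcomp (fun t => ?_) (by simp [hroot])
  · simpa [hr0, Complex.I_ne_zero] using hzero
  · have ht := norm_mul_exp_mul_I hr t
    simpa [Function.comp, Complex.inv_eq_conj ht] using hF _ ht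

theorem conjReflect_eq (hF : NonnegOnCircle n F) (hdeg : F.natDegree ≤ 2 * n) :
    conjReflect (2 * n) F = F := by
  refine eq_of_eval_eq_on_unitCircle fun z hz => ?_
  have hreal : z ^ n * conj (F.eval z) = conj z ^ n * F.eval z := by
    simpa using (hF z hz).isSelfAdjoint.star_eq
  have hzz : conj z ^ n * z ^ n = 1 := by
    rw [← mul_pow, Complex.conj_mul_self_of_norm_eq_one hz, one_pow]
  rw [eval_conjReflect_of_norm_eq_one hdeg hz]
  linear_combination z ^ n * hreal + F.eval z * hzz

theorem eval_conj_inv_eq_zero (hF : NonnegOnCircle n F) (hdeg : F.natDegree ≤ 2 * n) {r : ℂ}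
    (hr : r ≠ 0) (hroot : F.eval r = 0) : F.eval (conj r)⁻¹ = 0 := by
  rw [← hF.conjReflect_eq hdeg, eval_conjReflect hdeg (by simpa using hr)]
  simp [hroot]

theorem X_sub_C_mul_X_sub_C_conj_inv_dvd (hF : NonnegOnCircle n F) (hdeg : F.natDegree ≤ 2 * n)
    {r : ℂ} (hr : r ≠ 0) (hroot : F.eval r = 0) : (X - C r) * (X - C (conj r)⁻¹) ∣ F := by
  by_cases hr1 : ‖r‖ = 1
  · rcases eq_or_ne F 0 with rfl | hF0
    · exact dvd_zero _
    rw [Complex.inv_conj_of_norm_eq_one hr1, ← sq, ← le_rootMultiplicity_iff hF0]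
    exact (one_lt_rootMultiplicity_iff_isRoot hF0).mpr
      ⟨hroot, hF.derivative_eval_eq_zero hr1 hroot⟩
  · have hne : r - (conj r)⁻¹ ≠ 0 :=
      sub_ne_zero.mpr fun h => hr1 (Complex.norm_eq_one_of_inv_conj_eq hr h.symm)
    exact (isCoprime_X_sub_C_of_isUnit_sub hne.isUnit).mul_dvd (dvd_iff_isRoot.mpr hroot)
      (dvd_iff_isRoot.mpr (hF.eval_conj_inv_eq_zero hdeg hr hroot))

theorem of_X_sub_C_mul_X_sub_C_conj_inv_mul {r : ℂ} {G : ℂ[X]} (hr : r ≠ 0)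
    (hF : NonnegOnCircle (n + 1) ((X - C r) * (X - C (conj r)⁻¹) * G)) :
    NonnegOnCircle n (C (-r) * G) := by
  refine of_forall_ne (r := r) fun z hz hzr => ?_
  have hzr0 : ‖z - r‖ ≠ 0 := norm_ne_zero_iff.mpr (sub_ne_zero.mpr hzr)
  have hkey := Complex.norm_sq_mul_sub_mul_sub_conj_inv hz hr
  have hzz := Complex.conj_mul_self_of_norm_eq_one hz
  have hval : conj z ^ n * (C (-r) * G).eval z
      = ((‖r‖ ^ 2 / ‖z - r‖ ^ 2 : ℝ) : ℂ) * (conj z ^ (n + 1) *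
        ((X - C r) * (X - C (conj r)⁻¹) * G).eval z) := by
    simp only [eval_mul, eval_sub, eval_X, eval_C]
    rw [Complex.ofReal_div, div_mul_eq_mul_div, eq_div_iff (by exact_mod_cast pow_ne_zero 2 hzr0)]
    push_cast
    linear_combination (-(conj z ^ (n + 1) * G.eval z)) * hkey
      + (conj z ^ n * r * G.eval z * ‖z - r‖ ^ 2) * hzz
  rw [hval]
  exact mul_nonneg (Complex.zero_le_real.mpr (by positivity)) (hF z hz)

theorem coeff_two_mul_eq_conj_coeff_zero (hF : NonnegOnCircle n F) (hdeg : F.natDegree ≤ 2 * n) :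
    F.coeff (2 * n) = conj (F.coeff 0) := by
  rw [← hF.conjReflect_eq hdeg, coeff_conjReflect _ le_rfl, Nat.sub_self, hF.conjReflect_eq hdeg]

theorem divX_of_coeff_zero_eq_zero (hF : NonnegOnCircle (n + 1) F)
    (hdeg : F.natDegree ≤ 2 * (n + 1)) (h0 : F.coeff 0 = 0) :
    NonnegOnCircle n F.divX ∧ F.divX.natDegree ≤ 2 * n := by
  have hXF : X * F.divX = F := by simpa [h0] using X_mul_divX_add F
  refine ⟨fun z hz => ?_, ?_⟩
  · have h := hF z hz
    rw [← hXF, eval_mul, eval_X, pow_succ, mul_assoc, ← mul_assoc (conj z),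
      Complex.conj_mul_self_of_norm_eq_one hz, one_mul] at h
    exact h
  · have := natDegree_le_pred hdeg (by rw [hF.coeff_two_mul_eq_conj_coeff_zero hdeg, h0, map_zero])
    rw [natDegree_divX_eq_natDegree_tsub_one]
    omega

theorem exists_eq_X_sub_C_mul_X_sub_C_conj_inv_mul (hF : NonnegOnCircle (n + 1) F)
    (hdeg : F.natDegree ≤ 2 * (n + 1)) (h0 : F.coeff 0 ≠ 0) :
    ∃ r ≠ 0, ∃ G : ℂ[X], F = (X - C r) * (X - C (conj r)⁻¹) * G ∧ G.natDegree ≤ 2 * n := by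
  have hdeg_pos : 0 < F.degree := by
    rw [← natDegree_pos_iff_degree_pos]
    have := le_natDegree_of_ne_zero (p := F) (n := 2 * (n + 1))
      (by simpa [hF.coeff_two_mul_eq_conj_coeff_zero hdeg] using h0)
    omega
  obtain ⟨r, hr⟩ := Complex.exists_root hdeg_pos
  have hr0 : r ≠ 0 := by
    rintro rfl
    exact h0 (by rwa [coeff_zero_eq_eval_zero])
  have hM : ((X - C r) * (X - C (conj r)⁻¹)).Monic := (monic_X_sub_C r).mul (monic_X_sub_C _)
  refine ⟨r, hr0, F /ₘ ((X - C r) * (X - C (conj r)⁻¹)), ?_, ?_⟩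
  · have h := modByMonic_add_div F ((X - C r) * (X - C (conj r)⁻¹))
    rwa [(modByMonic_eq_zero_iff_dvd hM).mpr (hF.X_sub_C_mul_X_sub_C_conj_inv_dvd hdeg hr0 hr),
      zero_add, eq_comm] at h
  · rw [natDegree_divByMonic F hM, (monic_X_sub_C r).natDegree_mul (monic_X_sub_C _),
      natDegree_X_sub_C, natDegree_X_sub_C]
    omega

theorem fejer_riesz (hF : NonnegOnCircle n F) (hdeg : F.natDegree ≤ 2 * n) :
    ∃ Q : ℂ[X], Q.natDegree ≤ n ∧ ∀ z : ℂ, ‖z‖ = 1 → F.eval z = z ^ n * (‖Q.eval z‖ ^ 2 : ℝ) := by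
  induction n generalizing F with
  | zero =>
    have hconst : F = C (F.coeff 0) := eq_C_of_natDegree_le_zero hdeg
    have h1 := hF 1 (by simp)
    rw [hconst, eval_C, pow_zero, one_mul] at h1
    obtain ⟨x, hx, hxF⟩ := RCLike.nonneg_iff_exists_ofReal.mp h1
    refine ⟨C (Real.sqrt x : ℂ), by simp, fun z _ => ?_⟩
    rw [hconst, eval_C, eval_C, ← hxF]
    simp [Real.sq_sqrt hx]
  | succ n ih =>
    by_cases h0 : F.coeff 0 = 0
    · obtain ⟨hG, hGdeg⟩ := hF.divX_of_coeff_zero_eq_zero hdeg h0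
      obtain ⟨Q, hQdeg, hQ⟩ := ih hG hGdeg
      refine ⟨Q, hQdeg.trans n.le_succ, fun z hz => ?_⟩
      rw [← X_mul_divX_add F, h0, map_zero, add_zero, eval_mul, eval_X, hQ z hz]
      ring
    · obtain ⟨r, hr0, G, rfl, hGdeg⟩ := hF.exists_eq_X_sub_C_mul_X_sub_C_conj_inv_mul hdeg h0
      obtain ⟨Q, hQdeg, hQ⟩ := ih (of_X_sub_C_mul_X_sub_C_conj_inv_mul hr0 hF)
        ((natDegree_C_mul_le _ _).trans hGdeg)
      refine ⟨C (‖r‖⁻¹ : ℂ) * ((X - C r) * Q), ?_,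
        fun z hz => eval_X_sub_C_mul_X_sub_C_conj_inv_mul hz hr0 (hQ z hz)⟩
      refine (natDegree_C_mul_le _ _).trans (natDegree_mul_le.trans ?_)
      rw [natDegree_X_sub_C]
      omega

end NonnegOnCircle

theorem exists_complementary_polynomial {d : ℕ} {P : ℂ[X]} (hPd : P.natDegree ≤ d)
    (hP : ∀ z : ℂ, ‖z‖ = 1 → ‖P.eval z‖ ≤ 1) :
    ∃ Q : ℂ[X], Q.natDegree ≤ d ∧ ∀ z : ℂ, ‖z‖ = 1 → ‖P.eval z‖ ^ 2 + ‖Q.eval z‖ ^ 2 = 1 := by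
  set F := X ^ d - P * conjReflect d P
  have hFz : ∀ z : ℂ, ‖z‖ = 1 → F.eval z = z ^ d * ((1 - ‖P.eval z‖ ^ 2 : ℝ) : ℂ) := by
    intro z hz
    simp only [F, eval_sub, eval_pow, eval_X, eval_mul, eval_conjReflect_of_norm_eq_one hPd hz]
    push_cast
    rw [← Complex.mul_conj']
    ring
  have hF : NonnegOnCircle d F := by
    intro z hz
    rw [hFz z hz, ← mul_assoc, ← mul_pow, Complex.conj_mul_self_of_norm_eq_one hz, one_pow, one_mul,
      Complex.zero_le_real, sub_nonneg]
    exact pow_le_one₀ (norm_nonneg _) (hP z hz)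
  have hFdeg : F.natDegree ≤ 2 * d :=
    (natDegree_sub_le_of_le (natDegree_X_pow_le d)
      (natDegree_mul_le_of_le hPd (natDegree_conjReflect_le hPd))).trans (by omega)
  obtain ⟨Q, hQd, hQ⟩ := hF.fejer_riesz hFdeg
  refine ⟨Q, hQd, fun z hz => ?_⟩
  have h := (hFz z hz).symm.trans (hQ z hz)
  rw [mul_right_inj' (pow_ne_zero d (by rintro rfl; simp at hz)), Complex.ofReal_inj] at h
  linarith

theorem norm_sq_add_norm_sq_rotate {w : ℂ} (hw : ‖w‖ = 1) {c s : ℝ} (hcs : c ^ 2 + s ^ 2 = 1)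
    (a b : ℂ) : ‖w * c * a + s * b‖ ^ 2 + ‖w * s * a - c * b‖ ^ 2 = ‖a‖ ^ 2 + ‖b‖ ^ 2 := by
  have hww := Complex.conj_mul_self_of_norm_eq_one hw
  have hcs' : (c : ℂ) ^ 2 + (s : ℂ) ^ 2 = 1 := by exact_mod_cast hcs
  apply Complex.ofReal_injective
  push_cast
  simp only [← Complex.mul_conj', map_add, map_sub, map_mul, Complex.conj_ofReal]
  linear_combination (a * conj a * conj w * w) * hcs' + (b * conj b) * hcs' + (a * conj a) * hww

theorem coeff_mul_conj_coeff_zero_add_eq_zero {D : ℕ} (hD : D ≠ 0) {p q : ℂ[X]}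
    (hp : p.natDegree ≤ D) (hq : q.natDegree ≤ D)
    (hpq : ∀ z : ℂ, ‖z‖ = 1 → ‖p.eval z‖ ^ 2 + ‖q.eval z‖ ^ 2 = 1) :
    p.coeff D * conj (p.coeff 0) + q.coeff D * conj (q.coeff 0) = 0 := by
  have hpoly : p * conjReflect D p + q * conjReflect D q = X ^ D := by
    refine eq_of_eval_eq_on_unitCircle fun z hz => ?_
    have h := congrArg (fun x : ℝ => (x : ℂ)) (hpq z hz)
    push_cast at h
    rw [← Complex.mul_conj', ← Complex.mul_conj'] at h
    simp only [eval_add, eval_mul, eval_conjReflect_of_norm_eq_one hp hz,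
      eval_conjReflect_of_norm_eq_one hq hz, eval_pow, eval_X]
    linear_combination z ^ D * h
  have hcoeff := congrArg (coeff · (D + D)) hpoly
  simp only [coeff_add, coeff_mul_add_eq_of_natDegree_le hp (natDegree_conjReflect_le hp),
    coeff_mul_add_eq_of_natDegree_le hq (natDegree_conjReflect_le hq), coeff_X_pow,
    coeff_conjReflect _ le_rfl, Nat.sub_self] at hcoeff
  rw [hcoeff, if_neg (by omega)]

theorem exists_norm_sq_add_norm_sq_eq_one_orthogonal {x y u v : ℂ}
    (h : u * conj x + v * conj y = 0) :
    ∃ α β : ℂ, ‖α‖ ^ 2 + ‖β‖ ^ 2 = 1 ∧ α * x + β * y = 0 ∧ conj β * u = conj α * v := by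
  obtain ⟨α, β, hne, hxy, huv⟩ : ∃ α β : ℂ, (α ≠ 0 ∨ β ≠ 0) ∧ α * x + β * y = 0 ∧
      conj β * u = conj α * v := by
    by_cases hxy : x = 0 ∧ y = 0
    · obtain ⟨rfl, rfl⟩ := hxy
      by_cases huv : u = 0 ∧ v = 0
      · exact ⟨1, 0, by simp, by simp, by simp [huv.2]⟩
      · exact ⟨conj u, conj v, by simpa [← not_and_or] using huv, by simp, by simp [mul_comm]⟩
    · exact ⟨-y, x, by simpa [← not_and_or, and_comm] using hxy, by ring,
        by simp; linear_combination h⟩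
  have hn : 0 < ‖α‖ ^ 2 + ‖β‖ ^ 2 := by
    rcases hne with hne | hne <;> have := norm_pos_iff.mpr hne <;> positivity
  set n := Real.sqrt (‖α‖ ^ 2 + ‖β‖ ^ 2)
  have hn0 : (n : ℂ) ≠ 0 := by exact_mod_cast (Real.sqrt_pos.mpr hn).ne'
  refine ⟨α / n, β / n, ?_, ?_, ?_⟩
  · rw [norm_div, norm_div, Complex.norm_real, Real.norm_of_nonneg (Real.sqrt_nonneg _), div_pow,
      div_pow, Real.sq_sqrt hn.le, ← add_div, div_self hn.ne']
  · rw [div_mul_eq_mul_div, div_mul_eq_mul_div, ← add_div, hxy, zero_div]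
  · simp only [map_div₀, Complex.conj_ofReal]
    rw [div_mul_eq_mul_div, div_mul_eq_mul_div, huv]

theorem exists_angles_of_norm_sq_add_norm_sq_eq_one {α β : ℂ} (h : ‖α‖ ^ 2 + ‖β‖ ^ 2 = 1) :
    ∃ θ φ lam : ℝ, Complex.exp (Complex.I * ((lam : ℂ) + (φ : ℂ))) * (Real.cos θ : ℂ) = α ∧
      Complex.exp (Complex.I * (lam : ℂ)) * (Real.sin θ : ℂ) = β := by
  refine ⟨Real.arccos ‖α‖, α.arg - β.arg, β.arg, ?_, ?_⟩
  · rw [Real.cos_arccos (by linarith [norm_nonneg α]) (by nlinarith [norm_nonneg β, norm_nonneg α]),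
      show Complex.I * ((β.arg : ℂ) + ((α.arg - β.arg : ℝ) : ℂ)) = α.arg * Complex.I by
        push_cast; ring, mul_comm]
    exact Complex.norm_mul_exp_arg_mul_I α
  · rw [Real.sin_arccos, show 1 - ‖α‖ ^ 2 = ‖β‖ ^ 2 by linarith, Real.sqrt_sq (norm_nonneg β),
      mul_comm, mul_comm Complex.I]
    exact Complex.norm_mul_exp_arg_mul_I β

theorem exists_layer_angles {x y u v : ℂ} (h : u * conj x + v * conj y = 0) :
    ∃ θ φ : ℝ, conj (Complex.exp (Complex.I * φ)) * Real.cos θ * x + Real.sin θ * y = 0 ∧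
      conj (Complex.exp (Complex.I * φ)) * Real.sin θ * u = Real.cos θ * v := by
  obtain ⟨α, β, hαβ, hxy, huv⟩ := exists_norm_sq_add_norm_sq_eq_one_orthogonal h
  obtain ⟨θ, φ, lam, rfl, rfl⟩ := exists_angles_of_norm_sq_add_norm_sq_eq_one hαβ
  set E := Complex.exp (Complex.I * φ)
  set L := Complex.exp (Complex.I * lam)
  have hLE : Complex.exp (Complex.I * ((lam : ℂ) + φ)) = L * E := by rw [mul_add, Complex.exp_add]
  have hEE : E * conj E = 1 := by
    rw [Complex.mul_conj', Complex.norm_exp_I_mul_ofReal]; norm_num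
  have hconj : conj (Complex.exp (Complex.I * ((-φ : ℝ) : ℂ))) = E := by
    rw [← Complex.exp_conj]; simp [E]
  rw [hLE] at hxy huv
  refine ⟨θ, -φ, ?_, ?_⟩ <;> rw [hconj]
  · refine mul_left_cancel₀ (Complex.exp_ne_zero (Complex.I * lam)) ?_
    linear_combination hxy
  · have hsu : (Real.sin θ : ℂ) * u = conj E * Real.cos θ * v := by
      have hL : conj L ≠ 0 := by simp [L]
      refine mul_left_cancel₀ hL ?_
      simp only [map_mul, Complex.conj_ofReal] at huv
      linear_combination huv
    linear_combination E * hsu + Real.cos θ * v * hEE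

theorem exists_layer_factor_of_coeff {d : ℕ} {p q : ℂ[X]} (hp : p.natDegree ≤ d + 1)
    (hq : q.natDegree ≤ d + 1) (hpq : ∀ z : ℂ, ‖z‖ = 1 → ‖p.eval z‖ ^ 2 + ‖q.eval z‖ ^ 2 = 1)
    {e : ℂ} (he : ‖e‖ = 1) {c s : ℝ} (hcs : c ^ 2 + s ^ 2 = 1)
    (h0 : conj e * c * p.coeff 0 + s * q.coeff 0 = 0)
    (htop : conj e * s * p.coeff (d + 1) = c * q.coeff (d + 1)) :
    ∃ p' q' : ℂ[X], p'.natDegree ≤ d ∧ q'.natDegree ≤ d ∧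
      (∀ z : ℂ, ‖z‖ = 1 → ‖p'.eval z‖ ^ 2 + ‖q'.eval z‖ ^ 2 = 1) ∧
      p = C (e * c) * (X * p') + C (e * s) * q' ∧ q = C (s : ℂ) * (X * p') - C (c : ℂ) * q' := by
  set A := C (conj e * c) * p + C (s : ℂ) * q
  have hXA : X * A.divX = A := by
    simpa [A, h0] using X_mul_divX_add A
  have hAdeg : A.natDegree ≤ d + 1 := natDegree_add_le_of_degree_le
    ((natDegree_C_mul_le _ _).trans hp) ((natDegree_C_mul_le _ _).trans hq)
  have hee : C e * C (conj e) = 1 := by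
    rw [← C_mul, Complex.mul_conj', he]; simp
  have hcs' : C (c : ℂ) * C (c : ℂ) + C (s : ℂ) * C (s : ℂ) = 1 := by
    simp only [← C_mul, ← C_add, ← C_1]
    exact congrArg C (by exact_mod_cast (by linarith : c * c + s * s = 1))
  refine ⟨A.divX, C (conj e * s) * p - C (c : ℂ) * q, ?_, ?_, fun z hz => ?_, ?_, ?_⟩
  · rw [natDegree_divX_eq_natDegree_tsub_one]; omega
  · have hle : (C (conj e * s) * p - C (c : ℂ) * q).natDegree ≤ d + 1 :=
      (natDegree_sub_le_of_le ((natDegree_C_mul_le _ p).trans hp)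
        ((natDegree_C_mul_le _ q).trans hq)).trans (max_self _).le
    simpa using natDegree_le_pred hle (by rw [coeff_sub, coeff_C_mul, coeff_C_mul, htop, sub_self])
  · have hXz := congrArg (eval z) hXA
    rw [eval_mul, eval_X] at hXz
    have hnorm : ‖A.divX.eval z‖ = ‖A.eval z‖ := by rw [← hXz, norm_mul, hz, one_mul]
    rw [hnorm, ← hpq z hz]
    simpa [A] using norm_sq_add_norm_sq_rotate (w := conj e) (by rwa [Complex.norm_conj]) hcs
      (p.eval z) (q.eval z)
  · rw [hXA]
    simp only [A, C_mul]
    linear_combination (-(C (c : ℂ) * C (c : ℂ) + C (s : ℂ) * C (s : ℂ)) * p) * hee - p * hcs'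
  · rw [hXA]
    simp only [A, C_mul]
    linear_combination (-q) * hcs'

noncomputable def qspRot (θ φ lam : ℝ) : Matrix (Fin 2) (Fin 2) ℂ :=
  !![Complex.exp (Complex.I * ((lam : ℂ) + (φ : ℂ))) * (Real.cos θ : ℂ),
      Complex.exp (Complex.I * (φ : ℂ)) * (Real.sin θ : ℂ);
      Complex.exp (Complex.I * (lam : ℂ)) * (Real.sin θ : ℂ),
      -(Real.cos θ : ℂ)]

noncomputable def signalOp : Matrix (Fin 2) (Fin 2) ℂ[X] := !![X, 0; 0, 1]

noncomputable def qspLayer (θ φ : ℝ) : Matrix (Fin 2) (Fin 2) ℂ[X] :=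
  (qspRot θ φ 0).map C * signalOp

noncomputable def qspPolyCircuit (d : ℕ) (θ φ : Fin (d + 1) → ℝ) (lam : ℝ) :
    Matrix (Fin 2) (Fin 2) ℂ[X] :=
  (List.ofFn fun j : Fin d => qspLayer (θ j.succ) (φ j.succ)).prod * (qspRot (θ 0) (φ 0) lam).map C

theorem qspPolyCircuit_cons_cons_tail {d : ℕ} (θ φ : Fin (d + 1) → ℝ) (θ₁ φ₁ lam : ℝ) :
    qspPolyCircuit (d + 1) (Fin.cons (θ 0) (Fin.cons θ₁ (Fin.tail θ)))
      (Fin.cons (φ 0) (Fin.cons φ₁ (Fin.tail φ))) lam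
      = qspLayer θ₁ φ₁ * qspPolyCircuit d θ φ lam := by
  simp only [qspPolyCircuit, List.ofFn_succ, Fin.cons_succ, Fin.cons_zero, List.prod_cons,
    mul_assoc]
  rfl

theorem qspLayer_mul_apply_zero (θ φ : ℝ) (M : Matrix (Fin 2) (Fin 2) ℂ[X]) :
    (qspLayer θ φ * M) 0 0
      = C (Complex.exp (Complex.I * φ) * Real.cos θ) * (X * M 0 0)
        + C (Complex.exp (Complex.I * φ) * Real.sin θ) * M 1 0 := by
  simp [qspLayer, qspRot, signalOp, Matrix.mul_apply, Fin.sum_univ_two]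
  ring

theorem qspLayer_mul_apply_one (θ φ : ℝ) (M : Matrix (Fin 2) (Fin 2) ℂ[X]) :
    (qspLayer θ φ * M) 1 0 = C (Real.sin θ : ℂ) * (X * M 0 0) - C (Real.cos θ : ℂ) * M 1 0 := by
  simp [qspLayer, qspRot, signalOp, Matrix.mul_apply, Fin.sum_univ_two]
  ring

theorem exists_qspPolyCircuit_eq (d : ℕ) {p q : ℂ[X]} (hp : p.natDegree ≤ d)
    (hq : q.natDegree ≤ d) (hpq : ∀ z : ℂ, ‖z‖ = 1 → ‖p.eval z‖ ^ 2 + ‖q.eval z‖ ^ 2 = 1) :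
    ∃ (θ φ : Fin (d + 1) → ℝ) (lam : ℝ),
      qspPolyCircuit d θ φ lam 0 0 = p ∧ qspPolyCircuit d θ φ lam 1 0 = q := by
  induction d generalizing p q with
  | zero =>
    rw [eq_C_of_natDegree_le_zero hp, eq_C_of_natDegree_le_zero hq] at hpq ⊢
    obtain ⟨θ, φ, lam, hα, hβ⟩ :=
      exists_angles_of_norm_sq_add_norm_sq_eq_one (by simpa using hpq 1 (by simp))
    refine ⟨fun _ => θ, fun _ => φ, lam, ?_, ?_⟩ <;>
      simp [qspPolyCircuit, qspRot, ← hα, ← hβ]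
  | succ d ih =>
    obtain ⟨θ₁, φ₁, h0, htop⟩ := exists_layer_angles
      (coeff_mul_conj_coeff_zero_add_eq_zero d.succ_ne_zero hp hq hpq)
    obtain ⟨p', q', hp', hq', hpq', rfl, rfl⟩ := exists_layer_factor_of_coeff hp hq hpq
      (Complex.norm_exp_I_mul_ofReal φ₁) (Real.cos_sq_add_sin_sq θ₁) h0 htop
    obtain ⟨θ, φ, lam, h00, h10⟩ := ih hp' hq' hpq'
    refine ⟨Fin.cons (θ 0) (Fin.cons θ₁ (Fin.tail θ)), Fin.cons (φ 0) (Fin.cons φ₁ (Fin.tail φ)),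
      lam, ?_, ?_⟩ <;>
      rw [qspPolyCircuit_cons_cons_tail θ φ θ₁ φ₁ lam]
    · rw [qspLayer_mul_apply_zero, h00, h10]
    · rw [qspLayer_mul_apply_one, h00, h10]

section blockAeval

variable {R ι n : Type*} [CommRing R] [Fintype ι] [DecidableEq ι] [Fintype n] [DecidableEq n]
  (U : Matrix n n R)

noncomputable def blockAeval : Matrix ι ι R[X] →+* Matrix (ι × n) (ι × n) R :=
  (compRingEquiv ι n R).toRingHom.comp (aeval U).toRingHom.mapMatrix

theorem blockAeval_apply (M : Matrix ι ι R[X]) (i j : ι) (a b : n) :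
    blockAeval U M (i, a) (j, b) = aeval U (M i j) a b := rfl

theorem blockAeval_map_C (M : Matrix ι ι R) : blockAeval U (M.map C) = M ⊗ₖ 1 := by
  ext ⟨i, a⟩ ⟨j, b⟩
  simp [blockAeval_apply, Algebra.algebraMap_eq_smul_one, Matrix.one_apply]

end blockAeval

theorem gqspA_eq_blockAeval (N : ℕ) (U : Matrix (Fin N) (Fin N) ℂ) :
    gqspA N U = blockAeval U signalOp := by
  ext ⟨i, a⟩ ⟨j, b⟩
  fin_cases i <;> fin_cases j <;> simp [gqspA, signalOp, blockAeval_apply, Matrix.one_apply]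

theorem gqspCircuit_eq_blockAeval (N d : ℕ) (U : Matrix (Fin N) (Fin N) ℂ)
    (θ φ : Fin (d + 1) → ℝ) (lam : ℝ) :
    gqspCircuit N d U θ φ lam = blockAeval U (qspPolyCircuit d θ φ lam) := by
  simp only [gqspCircuit, qspPolyCircuit, qspLayer, map_mul, map_list_prod, List.map_ofFn,
    Function.comp_def, blockAeval_map_C, ← gqspA_eq_blockAeval]
  rfl

theorem block00_blockAeval (N : ℕ) (U : Matrix (Fin N) (Fin N) ℂ)
    (M : Matrix (Fin 2) (Fin 2) ℂ[X]) : block00 N (blockAeval U M) = aeval U (M 0 0) := rfl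

/-- Corollary 2: any polynomial `P` with `deg P ≤ d` and `|P(x)| ≤ 1` on the unit
circle can be implemented as the top-left block of a GQSP circuit: there are angles
`θ, φ ∈ ℝ^{d+1}`, `λ ∈ ℝ` such that for every unitary `U` the top-left `N×N` block of
`(∏_{j=1}^d R(θ_j,φ_j,0) A) R(θ_0,φ_0,λ)` equals `P(U)`. -/
theorem stmt_14 (d : ℕ) (P : Polynomial ℂ) (hPd : P.natDegree ≤ d)
    (hP : ∀ x : ℂ, ‖x‖ = 1 → ‖P.eval x‖ ≤ 1) :
    ∃ (θ φ : Fin (d + 1) → ℝ) (lam : ℝ),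
      ∀ N : ℕ, 1 ≤ N → ∀ U ∈ Matrix.unitaryGroup (Fin N) ℂ,
        block00 N (gqspCircuit N d U θ φ lam) = Polynomial.aeval U P := by
  obtain ⟨Q, hQd, hPQ⟩ := exists_complementary_polynomial hPd hP
  obtain ⟨θ, φ, lam, hP', -⟩ := exists_qspPolyCircuit_eq d hPd hQd hPQ
  refine ⟨θ, φ, lam, fun N _ U _ => ?_⟩
  rw [gqspCircuit_eq_blockAeval, block00_blockAeval, hP']
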